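/- Let C be a triangulated category, n ≥ 1 an integer, and 𝓜_1, …, 𝓜_n extension-closed full additive subcategories closed under isomorphisms such that every object of C admits a right minimal right 𝓜_i-approximation for each i, and Hom(M_i, ΣM_j) = 0 for all M_i ∈ 𝓜_i, M_j ∈ 𝓜_j whenever i < j. Put 𝒳_n := add(𝓜_1 ∗ 𝓜_2 ∗ ⋯ ∗ 𝓜_n) and 𝒴_n := ⋂_{i=1}^{n} 𝓜_i^⊥. Then (𝒳_n, 𝒴_n) is a torsion pair in C. -/

import Mathlib

/-!
Induction on the number of subcategories. Suppose `Z` sits in a triangle `X' ⟶ Z ⟶ C' ⟶ ΣX'`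
with `X' ∈ 𝓜₁ ∗ ⋯ ∗ 𝓜ₙ₋₁` and `C' ∈ ⋂_{i<n} 𝓜ᵢ^⊥`. Let `B ⟶ C'` be a right minimal right
`𝓜ₙ`-approximation with cone `Y`. By Wakamatsu's lemma `Y ∈ 𝓜ₙ^⊥`, and `Y ∈ 𝓜ᵢ^⊥` for `i < n`
because `Y` is an extension of `ΣB` by `C'` and `Hom(𝓜ᵢ, ΣB) = 0`. So `C' ∈ 𝓜ₙ ∗ 𝒴ₙ`, and
associativity of `∗` (the octahedral axiom) gives `Z ∈ (𝓜₁ ∗ ⋯ ∗ 𝓜ₙ) ∗ 𝒴ₙ`. The vanishing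
`Hom(𝒳ₙ, 𝒴ₙ) = 0` holds because `⊥`-classes are closed under extensions, sums and summands.
-/

open CategoryTheory Category Limits Pretriangulated ZeroObject

variable {C : Type*} [Category C] [Preadditive C] [HasZeroObject C]
  [HasShift C ℤ] [∀ n : ℤ, (shiftFunctor C n).Additive] [Pretriangulated C]
  [IsTriangulated C] [HasBinaryBiproducts C]

/-- `f : A ⟶ B` is a right `X`-approximation of `B`. -/
def IsRightApprox (X : Set C) {A B : C} (f : A ⟶ B) : Prop :=
  A ∈ X ∧ ∀ A' : C, A' ∈ X → ∀ g : A' ⟶ B, ∃ h : A' ⟶ A, h ≫ f = g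

/-- `X` is extension closed. -/
def ExtensionClosed (X : Set C) : Prop :=
  ∀ ⦃A B Z : C⦄ (f : A ⟶ B) (g : B ⟶ Z) (h : Z ⟶ A⟦(1 : ℤ)⟧),
    (Triangle.mk f g h ∈ distTriang C) → A ∈ X → Z ∈ X → B ∈ X

/-- `(X, Y)` is a torsion pair. -/
def TorsionPair (X Y : Set C) : Prop :=
  (∀ a ∈ X, ∀ b ∈ Y, ∀ f : a ⟶ b, f = 0) ∧
  ∀ Z : C, ∃ (A B : C) (_ : A ∈ X) (_ : B ∈ Y) (f : A ⟶ Z) (g : Z ⟶ B)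
    (h : B ⟶ A⟦(1 : ℤ)⟧), Triangle.mk f g h ∈ distTriang C

/-- `star A B` is the class of objects `E` admitting a distinguished triangle
`X ⟶ E ⟶ Y ⟶ ΣX` with `X ∈ A`, `Y ∈ B`. -/
def star (A B : Set C) : Set C :=
  {E : C | ∃ (X Y : C) (_ : X ∈ A) (_ : Y ∈ B) (f : X ⟶ E) (g : E ⟶ Y)
    (h : Y ⟶ X⟦(1 : ℤ)⟧), Triangle.mk f g h ∈ distTriang C}

/-- `AddClosure W` is the closure of `W` under finite direct sums, direct summands
and isomorphisms (`add W`). -/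
inductive AddClosure (W : Set C) : C → Prop
  | of (X : C) (hX : X ∈ W) : AddClosure W X
  | zero (X : C) (hX : IsZero X) : AddClosure W X
  | biprod (X Y : C) (hX : AddClosure W X) (hY : AddClosure W Y) : AddClosure W (X ⊞ Y)
  | summand (X Y : C) (hY : AddClosure W Y) (i : X ⟶ Y) (r : Y ⟶ X)
      (hir : i ≫ r = 𝟙 X) : AddClosure W X

section

-- `C` is redeclared with fewer instances, so that each lemma assumes only what it uses.
variable {C : Type*} [Category C] [Preadditive C]

def IsRightMinimal {B Z : C} (f : B ⟶ Z) : Prop :=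
  ∀ e : B ⟶ B, e ≫ f = f → IsIso e

def HasRightMinimalApprox (M : Set C) : Prop :=
  ∀ Z : C, ∃ (B : C) (f : B ⟶ Z), IsRightApprox M f ∧ IsRightMinimal f

def perp (M : Set C) : Set C :=
  {N | ∀ a ∈ M, ∀ f : a ⟶ N, f = 0}

lemma perp_subset_perp_addClosure [HasBinaryBiproducts C] (W : Set C) :
    perp W ⊆ perp {E | AddClosure W E} := by
  intro N hN E hE
  induction hE with
  | of X hX => exact hN X hX
  | zero X hX => exact fun f => hX.eq_of_src f 0
  | biprod X Y _ _ ihX ihY =>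
    intro f
    ext
    · simp [ihX (biprod.inl ≫ f)]
    · simp [ihY (biprod.inr ≫ f)]
  | summand X Y _ i r hir ih =>
    intro f
    rw [← id_comp f, ← hir, assoc, ih (r ≫ f), comp_zero]

section

variable [HasZeroObject C] [HasShift C ℤ] [∀ n : ℤ, (shiftFunctor C n).Additive]
  [Pretriangulated C]

lemma extensionClosed_perp (M : Set C) : ExtensionClosed (perp M) := by
  intro A B Z f g h hT hA hZ m hm φ
  obtain ⟨ψ, rfl⟩ := Triangle.coyoneda_exact₂ _ hT φ (hZ m hm (φ ≫ g))
  rw [show ψ = 0 from hA m hm ψ]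
  exact zero_comp

lemma extensionClosed_setOf_forall_mem_perp (L : List (Set C)) :
    ExtensionClosed {N : C | ∀ A ∈ L, N ∈ perp A} :=
  fun _ _ _ f g h hT hA hZ A hAL => extensionClosed_perp A f g h hT (hA A hAL) (hZ A hAL)

lemma star_mono {A A' B B' : Set C} (hA : A ⊆ A') (hB : B ⊆ B') : star A B ⊆ star A' B' :=
  fun _ ⟨X, Y, hX, hY, f, g, h, hT⟩ => ⟨X, Y, hA hX, hB hY, f, g, h, hT⟩

lemma mem_star_iff {A B : Set C} {E : C} :
    E ∈ star A B ↔ ObjectProperty.extensionProduct (· ∈ A) (· ∈ B) E :=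
  ⟨fun ⟨X, Y, hX, hY, f, g, h, hT⟩ => ⟨X, Y, f, g, h, hT, hX, hY⟩,
    fun ⟨X, Y, f, g, h, hT, hX, hY⟩ => ⟨X, Y, hX, hY, f, g, h, hT⟩⟩

lemma star_assoc [IsTriangulated C] (A B D : Set C) :
    star (star A B) D = star A (star B D) := by
  ext E
  simp only [mem_star_iff]
  exact (congrFun (ObjectProperty.extensionProduct_assoc (· ∈ A) (· ∈ B) (· ∈ D)) E).to_iff

lemma inter_perp_subset_perp_star (A B : Set C) : perp A ∩ perp B ⊆ perp (star A B) := by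
  rintro N ⟨hA, hB⟩ E ⟨X, Y, hX, hY, f, g, h, hT⟩ φ
  obtain ⟨ψ, rfl⟩ := Triangle.yoneda_exact₂ _ hT φ (hA X hX (f ≫ φ))
  rw [show ψ = 0 from hB Y hY ψ]
  exact comp_zero

lemma cone_mem_perp_of_isRightApprox {M : Set C} (hM : ExtensionClosed M) {B Z Y : C}
    {f : B ⟶ Z} (happ : IsRightApprox M f) (hmin : IsRightMinimal f) {g : Z ⟶ Y}
    {w : Y ⟶ B⟦(1 : ℤ)⟧} (hT : Triangle.mk f g w ∈ distTriang C) : Y ∈ perp M := by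
  intro m hm a
  obtain ⟨E, i, p, hTE⟩ := distinguished_cocone_triangle₂ (a ≫ w)
  have hcomm : (a ≫ w) ≫ (𝟙 B)⟦(1 : ℤ)⟧' = a ≫ w := by simp
  obtain ⟨e, he, -⟩ := complete_distinguished_triangle_morphism₂ _ _ hTE hT (𝟙 B) a hcomm
  -- The comparison map `e` factors through `f`; right minimality makes `i ≫ s` invertible,
  -- so `i` is a split mono and the connecting map `a ≫ w` vanishes.
  obtain ⟨s, hs⟩ := happ.2 E (hM i p (a ≫ w) hTE happ.1 hm) e
  have : IsIso (i ≫ s) :=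
    hmin _ (by rw [assoc]; exact (whisker_eq i hs).trans (he.trans (id_comp f)))
  have hi : Mono i := mono_of_mono i s
  have hw : a ≫ w = 0 := Triangle.mor₃_eq_zero_of_mono₁ _ hTE hi
  obtain ⟨b, hb⟩ := Triangle.coyoneda_exact₃ _ hT a hw
  obtain ⟨c, hc⟩ := happ.2 m hm b
  have hfg : f ≫ g = 0 := comp_distTriang_mor_zero₁₂ _ hT
  rw [hb, ← hc]
  exact (assoc c f g).trans ((whisker_eq c hfg).trans comp_zero)

lemma subset_star_inter_perp {P M : Set C} (hP : ExtensionClosed P) (hM : ExtensionClosed M)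
    (happrox : HasRightMinimalApprox M) (hMP : ∀ b ∈ M, b⟦(1 : ℤ)⟧ ∈ P) :
    P ⊆ star M (P ∩ perp M) := by
  intro Z hZ
  obtain ⟨B, f, happ, hmin⟩ := happrox Z
  obtain ⟨Y, g, w, hT⟩ := distinguished_cocone_triangle f
  have hY : Y ∈ P := hP g w _ (rot_of_distTriang _ hT) hZ (hMP B happ.1)
  exact ⟨B, Y, happ.1, ⟨hY, cone_mem_perp_of_isRightApprox hM happ hmin hT⟩, f, g, w, hT⟩

lemma setOf_forall_mem_perp_subset_perp_foldl_star (M0 : Set C) (Ms : List (Set C)) :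
    {N : C | ∀ A ∈ M0 :: Ms, N ∈ perp A} ⊆ perp (Ms.foldl star M0) := by
  induction Ms generalizing M0 with
  | nil => exact fun N hN => hN M0 (List.mem_cons_self ..)
  | cons M1 Ms ih =>
    intro N hN
    obtain ⟨h0, h1, hMs⟩ := List.forall_mem_cons.1 hN |>.imp_right List.forall_mem_cons.1
    exact ih (star M0 M1)
      (List.forall_mem_cons.2 ⟨inter_perp_subset_perp_star M0 M1 ⟨h0, h1⟩, hMs⟩)

lemma mem_star_foldl_star_setOf_forall_mem_perp [IsTriangulated C] (M0 : Set C)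
    (Ms : List (Set C)) (hext : ∀ A ∈ M0 :: Ms, ExtensionClosed A)
    (happrox : ∀ A ∈ M0 :: Ms, HasRightMinimalApprox A)
    (hvanish : (M0 :: Ms).Pairwise
      (fun A B => ∀ a ∈ A, ∀ b ∈ B, ∀ f : a ⟶ b⟦(1 : ℤ)⟧, f = 0)) (Z : C) :
    Z ∈ star (Ms.foldl star M0) {N | ∀ A ∈ M0 :: Ms, N ∈ perp A} := by
  induction Ms using List.reverseRecOn generalizing Z with
  | nil =>
    obtain ⟨B, f, happ, hmin⟩ := happrox M0 (List.mem_singleton_self _) Z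
    obtain ⟨Y, g, w, hT⟩ := distinguished_cocone_triangle f
    have hY := cone_mem_perp_of_isRightApprox (hext M0 (List.mem_singleton_self _)) happ hmin hT
    exact ⟨B, Y, happ.1, List.forall_mem_singleton.2 hY, f, g, w, hT⟩
  | append_singleton L Mn ih =>
    have hsub : (M0 :: L).Sublist (M0 :: (L ++ [Mn])) :=
      (L.sublist_append_left [Mn]).cons_cons M0
    have hMn : Mn ∈ M0 :: (L ++ [Mn]) := by simp
    have hMnP : ∀ b ∈ Mn, b⟦(1 : ℤ)⟧ ∈ {N : C | ∀ A ∈ M0 :: L, N ∈ perp A} :=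
      fun b hb A hA a ha f =>
        (List.pairwise_append.1 hvanish).2.2 A hA Mn (List.mem_singleton_self _) a ha b hb f
    have hZ := ih (fun A hA => hext A (hsub.subset hA)) (fun A hA => happrox A (hsub.subset hA))
      (hvanish.sublist hsub) Z
    have hstep := subset_star_inter_perp (extensionClosed_setOf_forall_mem_perp _) (hext Mn hMn)
      (happrox Mn hMn) hMnP
    rw [List.foldl_append, List.foldl_cons, List.foldl_nil, star_assoc]
    refine star_mono subset_rfl (hstep.trans (star_mono subset_rfl ?_)) hZ
    rintro _ ⟨hL, hN⟩
    exact List.forall_mem_append.2 ⟨hL, List.forall_mem_singleton.2 hN⟩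

end

end

theorem stmt3_general (M0 : Set C) (Ms : List (Set C))
    (hext : ∀ A ∈ M0 :: Ms, ExtensionClosed A)
    (happrox : ∀ A ∈ M0 :: Ms, ∀ Cobj : C, ∃ (B : C) (f : B ⟶ Cobj),
      IsRightApprox A f ∧ ∀ e : B ⟶ B, e ≫ f = f → IsIso e)
    (hvanish : (M0 :: Ms).Pairwise
      (fun A B => ∀ a ∈ A, ∀ b ∈ B, ∀ f : a ⟶ b⟦(1 : ℤ)⟧, f = 0)) :
    TorsionPair {E : C | AddClosure (Ms.foldl star M0) E}
      {N : C | ∀ A ∈ M0 :: Ms, ∀ a ∈ A, ∀ f : a ⟶ N, f = 0} :=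
  ⟨fun E hE _ hN => perp_subset_perp_addClosure _
      (setOf_forall_mem_perp_subset_perp_foldl_star M0 Ms hN) E hE,
    fun Z => star_mono (fun E hE => AddClosure.of E hE) subset_rfl
      (mem_star_foldl_star_setOf_forall_mem_perp M0 Ms hext happrox hvanish Z)⟩

/-- for extension-closed subcategories `M₀, …, Mₙ₋₁` admitting right
minimal right approximations with `Hom(Mᵢ, ΣMⱼ) = 0` for `i < j`, the pair
`(add(M₀ ∗ ⋯ ∗ Mₙ₋₁), ⋂ᵢ Mᵢ^⊥)` is a torsion pair. -/
theorem stmt3 (M0 : Set C) (Ms : List (Set C))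
    (hext : ∀ A ∈ M0 :: Ms, ExtensionClosed A)
    (hiso : ∀ A ∈ M0 :: Ms, ∀ ⦃X Y : C⦄, (X ≅ Y) → X ∈ A → Y ∈ A)
    (h0 : ∀ A ∈ M0 :: Ms, (0 : C) ∈ A)
    (hadd : ∀ A ∈ M0 :: Ms, ∀ X Y : C, X ∈ A → Y ∈ A → (X ⊞ Y) ∈ A)
    (happrox : ∀ A ∈ M0 :: Ms, ∀ Cobj : C, ∃ (B : C) (f : B ⟶ Cobj),
      IsRightApprox A f ∧ ∀ e : B ⟶ B, e ≫ f = f → IsIso e)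
    (hvanish : (M0 :: Ms).Pairwise
      (fun A B => ∀ a ∈ A, ∀ b ∈ B, ∀ f : a ⟶ b⟦(1 : ℤ)⟧, f = 0)) :
    TorsionPair {E : C | AddClosure (Ms.foldl star M0) E}
      {N : C | ∀ A ∈ M0 :: Ms, ∀ a ∈ A, ∀ f : a ⟶ N, f = 0} :=
  stmt3_general M0 Ms hext happrox hvanish
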